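/- Let A₀ be an n×n matrix over ℂ whose multiset of eigenvalues (roots of the characteristic polynomial, with multiplicity) is invariant under negation. Define recursively A_{m+1} = fromBlocks A_m 1 1 A_m. Then for every N, the multiset of eigenvalues of A_N is also invariant under negation. (This applies in particular when A₀ is the adjacency matrix of a bipartite regular graph, so the spectrum of every iterated graph cylinder of a bipartite graph is symmetric about 0.) -/

import Mathlib

/-- The index type of the `N`-fold iterated graph cylinder matrix over base index `V`. -/
def CylIdx (V : Type*) : ℕ → Type _
  | 0 => V
  | N + 1 => CylIdx V N ⊕ CylIdx V N

instance instFintypeCylIdx (V : Type*) [Fintype V] : ∀ N, Fintype (CylIdx V N)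
  | 0 => ‹Fintype V›
  | N + 1 => letI := instFintypeCylIdx V N
             inferInstanceAs (Fintype (CylIdx V N ⊕ CylIdx V N))

instance instDecidableEqCylIdx (V : Type*) [DecidableEq V] : ∀ N, DecidableEq (CylIdx V N)
  | 0 => ‹DecidableEq V›
  | N + 1 => letI := instDecidableEqCylIdx V N
             inferInstanceAs (DecidableEq (CylIdx V N ⊕ CylIdx V N))

/-- The iterated graph cylinder matrices: `A_{m+1} = [[A_m, I], [I, A_m]]`. -/
def iterCyl {V : Type*} [DecidableEq V] {R : Type*} [CommRing R] (A₀ : Matrix V V R) :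
    ∀ N : ℕ, Matrix (CylIdx V N) (CylIdx V N) R
  | 0 => A₀
  | N + 1 => Matrix.fromBlocks (iterCyl A₀ N) 1 1 (iterCyl A₀ N)


/-!
Conjugating by the unimodular block matrix `[[1, 0], [1, 1]]` turns `[[A, 1], [1, A]]` into the
block upper triangular `[[A + 1, 1], [0, A - 1]]`, so the eigenvalues of `A_{m+1}` are those of
`A_m` shifted by `+1` together with those shifted by `-1`. Negation exchanges these two shifted
copies of a negation-invariant multiset.
-/

open Polynomial

theorem Polynomial.roots_comp_X_sub_C {R : Type*} [CommRing R] [IsDomain R] (p : R[X]) (b : R) :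
    (p.comp (X - C b)).roots = p.roots.map (· + b) := by
  simpa [sub_eq_add_neg] using roots_comp_C_mul_X_add_C p 1 (-b) isUnit_one

theorem Multiset.map_neg_map_add_add_map_sub {G : Type*} [AddCommGroup G] {s : Multiset G}
    (hs : s.map (-·) = s) (c : G) :
    (s.map (· + c) + s.map (· - c)).map (-·) = s.map (· + c) + s.map (· - c) := by
  have map_neg_map (f g : G → G) (hfg : ∀ x, -f x = g (-x)) : (s.map f).map (-·) = s.map g := by
    conv_rhs => rw [← hs]
    simp only [Multiset.map_map, Function.comp_def, hfg]
  rw [Multiset.map_add, map_neg_map _ (· - c) (fun x ↦ neg_add' x c),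
    map_neg_map _ (· + c) (fun x ↦ by abel), add_comm]

namespace Matrix

variable {m R : Type*} [Fintype m] [DecidableEq m] [CommRing R]

theorem charpoly_fromBlocks_one_one (A : Matrix m m R) :
    (fromBlocks A 1 1 A).charpoly = (A + 1).charpoly * (A - 1).charpoly := by
  let P : Matrix (m ⊕ m) (m ⊕ m) R := fromBlocks 1 0 1 1
  let Q : Matrix (m ⊕ m) (m ⊕ m) R := fromBlocks 1 0 (-1) 1
  have hPQ : P * Q = 1 := by simp [P, Q, fromBlocks_multiply]
  have hconj : Q * fromBlocks A 1 1 A * P = fromBlocks (A + 1) 1 0 (A - 1) := by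
    simp [P, Q, fromBlocks_multiply, neg_add_eq_sub]
  calc (fromBlocks A 1 1 A).charpoly
      = (Q * (fromBlocks A 1 1 A * P)).charpoly := by
        rw [charpoly_mul_comm, Matrix.mul_assoc, hPQ, Matrix.mul_one]
    _ = (A + 1).charpoly * (A - 1).charpoly := by
        rw [← Matrix.mul_assoc, hconj, charpoly_fromBlocks_zero₂₁]

theorem charpoly_add_scalar (A : Matrix m m R) (μ : R) :
    (A + scalar m μ).charpoly = A.charpoly.comp (X - C μ) := by
  simpa [sub_eq_add_neg] using charpoly_sub_scalar A (-μ)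

variable [IsDomain R]

theorem roots_charpoly_add_scalar (A : Matrix m m R) (μ : R) :
    (A + scalar m μ).charpoly.roots = A.charpoly.roots.map (· + μ) := by
  rw [charpoly_add_scalar, roots_comp_X_sub_C]

theorem roots_charpoly_fromBlocks_one_one (A : Matrix m m R) :
    (fromBlocks A 1 1 A).charpoly.roots =
      A.charpoly.roots.map (· + 1) + A.charpoly.roots.map (· - 1) := by
  have hne : (A + 1).charpoly * (A - 1).charpoly ≠ 0 :=
    ((charpoly_monic _).mul (charpoly_monic _)).ne_zero
  rw [charpoly_fromBlocks_one_one, roots_mul hne, sub_eq_add_neg, ← map_one (scalar m),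
    ← map_neg (scalar m), roots_charpoly_add_scalar, roots_charpoly_add_scalar]
  simp only [sub_eq_add_neg]

end Matrix

theorem iterCyl_roots_neg_invariant {n : ℕ} (A₀ : Matrix (Fin n) (Fin n) ℂ)
    (h : A₀.charpoly.roots.map (fun x => -x) = A₀.charpoly.roots) (N : ℕ) :
    (iterCyl A₀ N).charpoly.roots.map (fun x => -x) = (iterCyl A₀ N).charpoly.roots := by
  induction N with
  | zero => exact h
  | succ N ih =>
    -- stated by ascription: `rw` cannot see through the `Fintype` instance on `CylIdx _ (N + 1)`
    have hroots : (iterCyl A₀ (N + 1)).charpoly.roots =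
        (iterCyl A₀ N).charpoly.roots.map (· + 1) + (iterCyl A₀ N).charpoly.roots.map (· - 1) :=
      Matrix.roots_charpoly_fromBlocks_one_one (iterCyl A₀ N)
    rw [hroots]
    exact Multiset.map_neg_map_add_add_map_sub ih 1
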